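/- For all k, d ≥ 1, the standard example S(k,d) contains no path on 2^{k+1} vertices and no cycle of length at least 2^k + 1. -/

import Mathlib

open SimpleGraph

variable {V α : Type*}

/-- The monochromatic subgraph of `G` under the colouring `f`:
edges of `G` whose endpoints get the same colour. -/
def monoSubgraph (G : SimpleGraph V) (f : V → α) : SimpleGraph V where
  Adj u v := G.Adj u v ∧ f u = f v
  symm := ⟨fun _ _ h => ⟨h.1.symm, h.2.symm⟩⟩
  loopless := ⟨fun v h => G.irrefl h.1⟩

/-- The colouring `f` has defect `d`: every vertex has at most `d`
neighbours of its own colour. -/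
def HasDefect (G : SimpleGraph V) (f : V → α) (d : ℕ) : Prop :=
  ∀ v, {u | G.Adj v u ∧ f u = f v}.ncard ≤ d

/-- The colouring `f` has clustering `c`: every monochromatic connected
component has at most `c` vertices. -/
def HasClustering (G : SimpleGraph V) (f : V → α) (c : ℕ) : Prop :=
  ∀ v, {u | (monoSubgraph G f).Reachable v u}.ncard ≤ c

/-- Vertices of the standard example `S(h,d)`: lists over `Fin (d+1)` of
length at most `h`. -/
def SVert (h d : ℕ) : Type := {l : List (Fin (d + 1)) // l.length ≤ h}

/-- The standard example `S(h,d)`: the closure of the complete `(d+1)`-ary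
tree of depth `h+1`; adjacency is the strict prefix relation. -/
def stdS (h d : ℕ) : SimpleGraph (SVert h d) where
  Adj u v := u ≠ v ∧ (u.1 <+: v.1 ∨ v.1 <+: u.1)
  symm := ⟨fun _ _ h => ⟨h.1.symm, h.2.symm⟩⟩
  loopless := ⟨fun v h => h.1 rfl⟩

section Helpers
open List

variable {β : Type*}

/-- adjacency on raw lists -/
def Rl (x y : List β) : Prop := x ≠ y ∧ (x <+: y ∨ y <+: x)

lemma head?_eq_of_prefix {x y : List β} (h : x <+: y) (hx : x ≠ []) :
    x.head? = y.head? := by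
  obtain ⟨t, rfl⟩ := h
  simp [List.head?_append, Option.or_of_isSome, List.isSome_head?.2 hx]

lemma head?_eq_of_Rl {x y : List β} (h : Rl x y) (hx : x ≠ []) (hy : y ≠ []) :
    x.head? = y.head? := by
  rcases h.2 with h' | h'
  · exact head?_eq_of_prefix h' hx
  · exact (head?_eq_of_prefix h' hy).symm

lemma tail_prefix_of_prefix {x y : List β} (h : x <+: y) (hx : x ≠ []) :
    x.tail <+: y.tail := by
  obtain ⟨t, rfl⟩ := h
  rw [List.tail_append]
  simp [hx]

lemma eq_of_tail_eq {x y : List β} (hx : x ≠ []) (hy : y ≠ []) (hh : x.head? = y.head?)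
    (ht : x.tail = y.tail) : x = y := by
  rcases x with _ | ⟨a, x⟩; · exact absurd rfl hx
  rcases y with _ | ⟨b, y⟩; · exact absurd rfl hy
  simp_all

lemma tail_Rl {x y : List β} (h : Rl x y) (hx : x ≠ []) (hy : y ≠ [])
    (hh : x.head? = y.head?) : Rl x.tail y.tail := by
  refine ⟨fun ht => h.1 (eq_of_tail_eq hx hy hh ht), ?_⟩
  rcases h.2 with h' | h'
  · exact Or.inl (tail_prefix_of_prefix h' hx)
  · exact Or.inr (tail_prefix_of_prefix h' hy)

/-- along a chain of nonempty lists, all heads agree with the first head -/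
lemma chain_head : ∀ {L : List (List β)} {a : List β}, Chain' Rl (a :: L) →
    (∀ x ∈ a :: L, x ≠ []) → ∀ x ∈ a :: L, x.head? = a.head? := by
  intro L
  induction L with
  | nil => intro a _ _ x hx; simp at hx; subst hx; rfl
  | cons b L ih =>
    intro a hc hne x hx
    have hab : a.head? = b.head? :=
      head?_eq_of_Rl (List.isChain_cons_cons.1 hc).1 (hne a (by simp)) (hne b (by simp))
    rcases List.mem_cons.1 hx with rfl | hx
    · rfl
    · have := ih ((List.isChain_cons_cons.1 hc).2) (fun y hy => hne y (by simp at hy ⊢; tauto)) x hx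
      rw [this, ← hab]

lemma same_head {L : List (List β)} (hc : Chain' Rl L) (hne : ∀ x ∈ L, x ≠ []) :
    ∀ x ∈ L, ∀ y ∈ L, x.head? = y.head? := by
  rcases L with _ | ⟨a, L⟩
  · simp
  · intro x hx y hy
    rw [chain_head hc hne x hx, chain_head hc hne y hy]

lemma chain'_tail : ∀ {L : List (List β)}, Chain' Rl L → (∀ x ∈ L, x ≠ []) →
    (∀ x ∈ L, ∀ y ∈ L, x.head? = y.head?) → Chain' Rl (L.map List.tail) := by
  intro L
  induction L with
  | nil => simp
  | cons a L ih =>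
    intro hc hne hh
    rcases L with _ | ⟨b, L⟩
    · exact List.isChain_singleton _
    · simp only [List.map_cons]
      apply List.isChain_cons_cons.2
      obtain ⟨h1, h2⟩ := List.isChain_cons_cons.1 hc
      refine ⟨tail_Rl h1 (hne a (by simp)) (hne b (by simp)) (hh a (by simp) b (by simp)), ?_⟩
      exact ih h2 (fun x hx => hne x (by simp at hx ⊢; tauto))
        (fun x hx y hy => hh x (by simp at hx ⊢; tauto) y (by simp at hy ⊢; tauto))

lemma nodup_tail {L : List (List β)} (hn : L.Nodup) (hne : ∀ x ∈ L, x ≠ [])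
    (hh : ∀ x ∈ L, ∀ y ∈ L, x.head? = y.head?) : (L.map List.tail).Nodup :=
  hn.map_on (fun x hx y hy ht => eq_of_tail_eq (hne x hx) (hne y hy) (hh x hx y hy) ht)

/-- Path bound: a nodup `Rl`-chain of lists of length ≤ k has < 2^(k+1) entries. -/
lemma path_bound : ∀ (k : ℕ) (L : List (List β)), Chain' Rl L → L.Nodup →
    (∀ x ∈ L, x.length ≤ k) → L.length < 2 ^ (k + 1) := by
  intro k
  induction k with
  | zero =>
    intro L hc hn hlen
    have : ∀ x ∈ L, x = [] := fun x hx => List.length_eq_zero_iff.1 (Nat.le_zero.1 (hlen x hx))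
    rcases L with _ | ⟨a, L⟩
    · simp
    · rcases L with _ | ⟨b, L⟩
      · simp
      · exfalso
        have ha := this a (by simp)
        have hb := this b (by simp)
        simp [ha, hb] at hn
  | succ k ih =>
    intro L hc hn hlen
    by_cases hmem : ([] : List β) ∈ L
    · obtain ⟨A, B, rfl⟩ := List.append_of_mem hmem
      replace hc := List.isChain_append.1 hc
      have hnA : A.Nodup := (List.nodup_append.1 hn).1
      have hnB' := (List.nodup_append.1 hn).2.1
      have hnB : B.Nodup := hnB'.of_cons
      have hdisj := List.nodup_append.1 hn
      have hneA : ∀ x ∈ A, x ≠ [] := by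
        intro x hx h; subst h
        exact hdisj.2.2 [] hx [] (by simp) rfl
      have hneB : ∀ x ∈ B, x ≠ [] := by
        intro x hx h; subst h
        exact (List.nodup_cons.1 hnB').1 hx
      have hcA := hc.1
      have hcB := (List.isChain_cons.1 hc.2.1).2
      have bndA : A.length < 2 ^ (k + 1) := by
        have := chain'_tail hcA hneA (same_head hcA hneA)
        have := ih (A.map List.tail) this (nodup_tail hnA hneA (same_head hcA hneA))
          (fun x hx => by
            obtain ⟨y, hy, rfl⟩ := List.mem_map.1 hx
            have := hlen y (by simp [hy])
            have hy' := hneA y hy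
            rcases y with _ | ⟨c, y⟩
            · simp at hy'
            · simp at this ⊢; omega)
        simpa using this
      have bndB : B.length < 2 ^ (k + 1) := by
        have := chain'_tail hcB hneB (same_head hcB hneB)
        have := ih (B.map List.tail) this (nodup_tail hnB hneB (same_head hcB hneB))
          (fun x hx => by
            obtain ⟨y, hy, rfl⟩ := List.mem_map.1 hx
            have := hlen y (by simp [hy])
            have hy' := hneB y hy
            rcases y with _ | ⟨c, y⟩
            · simp at hy'
            · simp at this ⊢; omega)
        simpa using this
      have : (A ++ [] :: B).length = A.length + B.length + 1 := by simp; omega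
      rw [this, pow_succ]
      omega
    · have hne : ∀ x ∈ L, x ≠ [] := fun x hx h => hmem (h ▸ hx)
      have hc' := chain'_tail hc hne (same_head hc hne)
      have := ih (L.map List.tail) hc' (nodup_tail hn hne (same_head hc hne))
        (fun x hx => by
          obtain ⟨y, hy, rfl⟩ := List.mem_map.1 hx
          have := hlen y hy
          have hy' := hne y hy
          rcases y with _ | ⟨c, y⟩
          · simp at hy'
          · simp at this ⊢; omega)
      have h2 : (2:ℕ) ^ (k+1) ≤ 2 ^ (k+2) := Nat.pow_le_pow_right (by norm_num) (by omega)
      simpa using lt_of_lt_of_le (by simpa using this) h2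

/-- shrink+path_bound: a nodup chain of NONEMPTY lists of length ≤ k+1 has < 2^(k+1) entries -/
lemma path_bound' (k : ℕ) (L : List (List β)) (hc : Chain' Rl L) (hn : L.Nodup)
    (hne : ∀ x ∈ L, x ≠ []) (hlen : ∀ x ∈ L, x.length ≤ k + 1) :
    L.length < 2 ^ (k + 1) := by
  have := path_bound k (L.map List.tail) (chain'_tail hc hne (same_head hc hne))
    (nodup_tail hn hne (same_head hc hne))
    (fun x hx => by
      obtain ⟨y, hy, rfl⟩ := List.mem_map.1 hx
      have := hlen y hy
      have hy' := hne y hy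
      rcases y with _ | ⟨c, y⟩
      · simp at hy'
      · simp at this ⊢; omega)
  simpa using this

lemma cycle_bound : ∀ (k : ℕ) (u : List β) (m : List (List β)),
    Chain' Rl (u :: m) → m.Nodup → m.getLast? = some u →
    (∀ x ∈ u :: m, x.length ≤ k) → 3 ≤ m.length → m.length ≤ 2 ^ k := by
  intro k
  induction k with
  | zero =>
    intro u m hc hn hlast hlen h3
    exfalso
    have : ∀ x ∈ u :: m, x = [] :=
      fun x hx => List.length_eq_zero_iff.1 (Nat.le_zero.1 (hlen x hx))
    rcases m with _ | ⟨a, m⟩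
    · simp at h3
    · rcases m with _ | ⟨b, m⟩
      · simp at h3
      · have ha := this a (by simp)
        have hb := this b (by simp)
        simp [ha, hb] at hn
  | succ k ih =>
    intro u m hc hn hlast hlen h3
    by_cases hu : u = []
    · -- u = [] : root is an endpoint of the cycle
      subst hu
      have hm_ne : m ≠ [] := by rintro rfl; simp at h3
      have hlast' : m.getLast hm_ne = [] := by
        rw [List.getLast?_eq_getLast hm_ne] at hlast
        exact (Option.some_inj.1 hlast)
      have hdecomp : m = m.dropLast ++ [[]] := by
        conv_lhs => rw [← List.dropLast_append_getLast hm_ne]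
        rw [hlast']
      set ys := m.dropLast with hys
      have hnys : ys.Nodup := by
        rw [hdecomp] at hn
        exact (List.nodup_append.1 hn).1
      have hneys : ∀ x ∈ ys, x ≠ [] := by
        intro x hx h; subst h
        rw [hdecomp] at hn
        exact (List.nodup_append.1 hn).2.2 [] hx [] (by simp) rfl
      have hcys : Chain' Rl ys := by
        have hcm : Chain' Rl m := hc.tail
        rw [hdecomp] at hcm
        exact (List.isChain_append.1 hcm).1
      have hlys : ∀ x ∈ ys, x.length ≤ k + 1 := by
        intro x hx
        exact hlen x (by rw [hdecomp]; simp [hx])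
      have := path_bound' k ys hcys hnys hneys hlys
      have : m.length = ys.length + 1 := by rw [hdecomp]; simp
      omega
    · by_cases hmem : ([] : List β) ∈ m
      · -- root is in the interior of the cycle; cut it out
        obtain ⟨C, D, rfl⟩ := List.append_of_mem hmem
        have hD_ne : D ≠ [] := by
          rintro rfl
          rw [List.getLast?_append_of_ne_nil C (l₂ := [[]]) (by simp)] at hlast
          simp at hlast
          exact hu hlast
        have hlastD : D.getLast? = some u := by
          have he : C ++ [] :: D = (C ++ [[]]) ++ D := by simp
          rw [he, List.getLast?_append_of_ne_nil _ hD_ne] at hlast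
          exact hlast
        have hnod := List.nodup_append.1 hn
        have hnC : C.Nodup := hnod.1
        have hnD : D.Nodup := hnod.2.1.of_cons
        have hneC : ∀ x ∈ C, x ≠ [] := fun x hx h => hnod.2.2 x hx [] (by simp) h
        have hneD : ∀ x ∈ D, x ≠ [] :=
          fun x hx h => (List.nodup_cons.1 hnod.2.1).1 (h ▸ hx)
        have hcm : Chain' Rl (C ++ [] :: D) := hc.tail
        have hcC : Chain' Rl C := (List.isChain_append.1 hcm).1
        have hcD : Chain' Rl D := ((List.isChain_append.1 hcm).2.1).tail
        have hedge : ∀ x ∈ D.getLast?, ∀ y ∈ C.head?, Rl x y := by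
          intro x hx y hy
          have hx' : x = u := by rw [hlastD] at hx; exact (Option.some_inj.1 hx.symm ▸ rfl)
          subst hx'
          have h1 := (List.isChain_cons.1 hc).1
          apply h1
          have hCy : C.head? = some y := hy
          rw [List.head?_append, hCy]
          rfl
        have hcE : Chain' Rl (D ++ C) := List.isChain_append.2 ⟨hcD, hcC, hedge⟩
        have hnE : (D ++ C).Nodup := by
          rw [List.nodup_append]
          exact ⟨hnD, hnC, fun x hx y hy hxy => hnod.2.2 y hy x (by simp [hx]) hxy.symm⟩
        have hneE : ∀ x ∈ D ++ C, x ≠ [] := by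
          intro x hx
          rcases List.mem_append.1 hx with h | h
          · exact hneD x h
          · exact hneC x h
        have hlE : ∀ x ∈ D ++ C, x.length ≤ k + 1 := by
          intro x hx
          apply hlen
          rcases List.mem_append.1 hx with h | h
          · simp [h]
          · simp [h]
        have := path_bound' k (D ++ C) hcE hnE hneE hlE
        have hlm : (C ++ [] :: D).length = (D ++ C).length + 1 := by simp; omega
        omega
      · -- root not on the cycle: shrink into a subtree
        have hne : ∀ x ∈ u :: m, x ≠ [] := by
          intro x hx h; subst h
          rcases List.mem_cons.1 hx with h | h
          · exact hu h.symm
          · exact hmem h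
        have hc' := chain'_tail hc hne (same_head hc hne)
        rw [List.map_cons] at hc'
        have hn' : (m.map List.tail).Nodup :=
          nodup_tail hn (fun x hx => hne x (by simp [hx]))
            (fun x hx y hy => same_head hc hne x (by simp [hx]) y (by simp [hy]))
        have hlast' : (m.map List.tail).getLast? = some u.tail := by
          rw [List.getLast?_map, hlast]; rfl
        have hlen' : ∀ x ∈ u.tail :: m.map List.tail, x.length ≤ k := by
          intro x hx
          rcases List.mem_cons.1 hx with rfl | hx
          · have := hlen u (by simp)
            have := hne u (by simp)
            rcases u with _ | ⟨c, u⟩ <;> simp_all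
          · obtain ⟨y, hy, rfl⟩ := List.mem_map.1 hx
            have := hlen y (by simp [hy])
            have hy' := hne y (by simp [hy])
            rcases y with _ | ⟨c, y⟩ <;> simp_all
        have := ih u.tail (m.map List.tail) hc' hn' hlast' hlen' (by simpa using h3)
        have h2 : (2:ℕ) ^ k ≤ 2 ^ (k+1) := Nat.pow_le_pow_right (by norm_num) (by omega)
        simp at this
        omega

end Helpers

/-- **Lemma 56 (StandardCircumference).** For all `k, d ≥ 1`, the standard
example `S(k,d)` contains no path on `2^(k+1)` vertices (every path has fewer
than `2^(k+1)` vertices) and no cycle of length at least `2^k + 1` (every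
cycle has length at most `2^k`). -/
theorem stmt17 (k d : ℕ) (hk : 1 ≤ k) (hd : 1 ≤ d) :
    (∀ (u v : SVert k d) (p : (stdS k d).Walk u v),
        p.IsPath → p.length + 1 < 2 ^ (k + 1)) ∧
    (∀ (u : SVert k d) (p : (stdS k d).Walk u u),
        p.IsCycle → p.length ≤ 2 ^ k) := by
  have hvi : Function.Injective (Subtype.val : SVert k d → List (Fin (d+1))) :=
    fun a b h => Subtype.ext h
  constructor
  · intro u v p hp
    have hc : List.Chain' Rl (p.support.map Subtype.val) := by
      apply (List.isChain_map _).2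
      exact p.isChain_adj_support.imp (fun a b h => ⟨fun he => h.1 (hvi he), h.2⟩)
    have hn : (p.support.map Subtype.val).Nodup := hp.support_nodup.map hvi
    have hl : ∀ x ∈ p.support.map Subtype.val, x.length ≤ k := by
      intro x hx
      obtain ⟨y, _, rfl⟩ := List.mem_map.1 hx
      exact y.2
    have := path_bound k _ hc hn hl
    erw [List.length_map, SimpleGraph.Walk.length_support] at this; exact this
  · intro u p hp
    have h3 := hp.three_le_length
    have ht : p.support.tail.length = p.length := by
      rw [List.length_tail, p.length_support]
      omega
    have htne : p.support.tail ≠ [] := by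
      intro h
      rw [h] at ht
      simp at ht
      omega
    have hc : List.Chain' Rl (u.1 :: (p.support.tail.map Subtype.val)) := by
      have hc0 : List.Chain' Rl (p.support.map Subtype.val) := by
        apply (List.isChain_map _).2
        exact p.isChain_adj_support.imp (fun a b h => ⟨fun he => h.1 (hvi he), h.2⟩)
      erw [p.support_eq_cons, List.map_cons] at hc0; exact hc0
    have hn : (p.support.tail.map Subtype.val).Nodup := hp.support_nodup.map hvi
    have hlast : (p.support.tail.map Subtype.val).getLast? = some u.1 := by
      erw [List.getLast?_map]
      have h1 : p.support.getLast? = some u := by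
        rw [List.getLast?_eq_getLast p.support_ne_nil]
        rw [p.getLast_support]
      have h2 : p.support.getLast? = p.support.tail.getLast? := by
        conv_lhs => rw [p.support_eq_cons]
        rcases h : p.support.tail with _ | ⟨b, l⟩
        · exact absurd h htne
        · rw [List.getLast?_cons_cons]
      erw [← h2, h1]; rfl
    have hl : ∀ x ∈ u.1 :: (p.support.tail.map Subtype.val), x.length ≤ k := by
      intro x hx
      rcases List.mem_cons.1 hx with rfl | hx
      · exact u.2
      · obtain ⟨y, _, rfl⟩ := List.mem_map.1 hx
        exact y.2
    have hlt : (p.support.tail.map Subtype.val).length = p.length := by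
      erw [List.length_map, ht]
    have := cycle_bound k u.1 _ hc hn hlast hl (by omega)
    omega
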